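/- Let W̄ ∈ ℝ^{N×N} be doubly stochastic, W = W̄ ⊗ I_d, J = (1/N)(1_N 1_Nᵀ) ⊗ I_d, and λ = ‖W − J‖ with λ < 1. For any x, v ∈ ℝ^{Nd}, η > 0, and x⁺ = W(x − ηv), it holds that ‖x⁺ − Jx⁺‖² ≤ ((1 + λ²)/2)·‖x − Jx‖² + (2η²λ²/(1 − λ²))·‖v − Jv‖². -/
import Mathlib


open MeasureTheory Matrix Finset

noncomputable section

abbrev Vec (N d : ℕ) := EuclideanSpace ℝ (Fin N × Fin d)
abbrev Blk (d : ℕ) := EuclideanSpace ℝ (Fin d)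

variable {N d : ℕ}

/-- `W̄ ⊗ I_d` as a matrix acting on stacked vectors. -/
def kron (Wb : Matrix (Fin N) (Fin N) ℝ) (d : ℕ) :
    Matrix (Fin N × Fin d) (Fin N × Fin d) ℝ :=
  fun p q => if p.2 = q.2 then Wb p.1 q.1 else 0

/-- the exact averaging matrix `J = (1/N)(1 1ᵀ) ⊗ I_d`. -/
def Jmat (N d : ℕ) : Matrix (Fin N × Fin d) (Fin N × Fin d) ℝ :=
  fun p q => if p.2 = q.2 then (N : ℝ)⁻¹ else 0

/-- action of `W = W̄ ⊗ I_d` on a stacked vector -/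
def Wmul (Wb : Matrix (Fin N) (Fin N) ℝ) (x : Vec N d) : Vec N d :=
  Matrix.toEuclideanLin (kron Wb d) x

/-- action of `J` on a stacked vector -/
def Jmul (N d : ℕ) (x : Vec N d) : Vec N d :=
  Matrix.toEuclideanLin (Jmat N d) x

/-- `λ = ‖W − J‖` (operator norm). -/
def lamOf (Wb : Matrix (Fin N) (Fin N) ℝ) (d : ℕ) : ℝ :=
  ‖LinearMap.toContinuousLinearMap (Matrix.toEuclideanLin (kron Wb d - Jmat N d))‖

/-- block average `x̄ = (1/N) ∑ₙ xₙ` of a stacked vector -/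
def blockAvg (x : Vec N d) : Blk d :=
  (WithLp.equiv 2 _).symm fun k => (N : ℝ)⁻¹ * ∑ n : Fin N, x (n, k)

lemma Wmul_apply (Wb : Matrix (Fin N) (Fin N) ℝ) (x : Vec N d) (p : Fin N × Fin d) :
    Wmul Wb x p = ∑ n : Fin N, Wb p.1 n * x (n, p.2) := by
  simp [Wmul, Matrix.toEuclideanLin_apply, Matrix.mulVec, dotProduct, kron,
    Fintype.sum_prod_type, mul_ite, mul_zero, ite_mul, zero_mul]

lemma Jmul_apply (x : Vec N d) (p : Fin N × Fin d) :
    Jmul N d x p = (N : ℝ)⁻¹ * ∑ n : Fin N, x (n, p.2) := by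
  simp [Jmul, Matrix.toEuclideanLin_apply, Matrix.mulVec, dotProduct, Jmat,
    Fintype.sum_prod_type, mul_ite, mul_zero, ite_mul, zero_mul, Finset.mul_sum]

lemma Jmul_Wmul (Wb : Matrix (Fin N) (Fin N) ℝ) (hcol : ∀ j, ∑ i, Wb i j = 1)
    (x : Vec N d) : Jmul N d (Wmul Wb x) = Jmul N d x := by
  apply PiLp.ext; intro p
  rw [Jmul_apply, Jmul_apply]
  congr 1
  calc ∑ n : Fin N, Wmul Wb x (n, p.2)
      = ∑ n : Fin N, ∑ m : Fin N, Wb n m * x (m, p.2) := by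
        refine Finset.sum_congr rfl fun n _ => ?_; rw [Wmul_apply]
    _ = ∑ m : Fin N, (∑ n : Fin N, Wb n m) * x (m, p.2) := by
        rw [Finset.sum_comm]; simp [Finset.sum_mul]
    _ = ∑ m : Fin N, x (m, p.2) := by simp [hcol]

lemma Wmul_Jmul (Wb : Matrix (Fin N) (Fin N) ℝ) (hrow : ∀ i, ∑ j, Wb i j = 1)
    (x : Vec N d) : Wmul Wb (Jmul N d x) = Jmul N d x := by
  apply PiLp.ext; intro p
  rw [Wmul_apply, Jmul_apply]
  have : ∀ n : Fin N, Jmul N d x (n, p.2) = (N : ℝ)⁻¹ * ∑ m : Fin N, x (m, p.2) :=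
    fun n => Jmul_apply x (n, p.2)
  simp only [this, ← Finset.sum_mul, hrow, one_mul]

lemma Jmul_Jmul (x : Vec N d) : Jmul N d (Jmul N d x) = Jmul N d x := by
  apply PiLp.ext; intro p
  rw [Jmul_apply, Jmul_apply]
  have : ∀ n : Fin N, Jmul N d x (n, p.2) = (N : ℝ)⁻¹ * ∑ m : Fin N, x (m, p.2) :=
    fun n => Jmul_apply x (n, p.2)
  simp only [this, Finset.sum_const, Finset.card_univ, Fintype.card_fin, nsmul_eq_mul]
  rcases Nat.eq_zero_or_pos N with h | h
  · subst h; simp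
  · have : (N : ℝ) ≠ 0 := Nat.cast_ne_zero.mpr h.ne'
    field_simp

lemma Wmul_sub (Wb : Matrix (Fin N) (Fin N) ℝ) (y z : Vec N d) :
    Wmul Wb (y - z) = Wmul Wb y - Wmul Wb z := map_sub (Matrix.toEuclideanLin (kron Wb d)) y z

lemma Wmul_smul (Wb : Matrix (Fin N) (Fin N) ℝ) (c : ℝ) (y : Vec N d) :
    Wmul Wb (c • y) = c • Wmul Wb y := map_smul (Matrix.toEuclideanLin (kron Wb d)) c y

lemma Jmul_sub (y z : Vec N d) :
    Jmul N d (y - z) = Jmul N d y - Jmul N d z := map_sub (Matrix.toEuclideanLin (Jmat N d)) y z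

lemma Jmul_smul (c : ℝ) (y : Vec N d) :
    Jmul N d (c • y) = c • Jmul N d y := map_smul (Matrix.toEuclideanLin (Jmat N d)) c y

lemma lam_bound (Wb : Matrix (Fin N) (Fin N) ℝ) (y : Vec N d) :
    ‖Matrix.toEuclideanLin (kron Wb d - Jmat N d) y‖ ≤ lamOf Wb d * ‖y‖ :=
  (LinearMap.toContinuousLinearMap (Matrix.toEuclideanLin (kron Wb d - Jmat N d))).le_opNorm y

/-- **Inequality (16) of Lemma A2(c)**: one gossip-plus-descent step contracts the
consensus error: for doubly stochastic `W̄`, `λ = ‖W − J‖ < 1`, `x⁺ = W(x − ηv)`,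
`‖x⁺ − Jx⁺‖² ≤ ((1+λ²)/2)‖x − Jx‖² + (2η²λ²/(1−λ²))‖v − Jv‖²`. -/
theorem consensus_contraction_sq
    (N d : ℕ) (Wb : Matrix (Fin N) (Fin N) ℝ)
    (hrow : ∀ i, ∑ j, Wb i j = 1) (hcol : ∀ j, ∑ i, Wb i j = 1)
    (hlam : lamOf Wb d < 1)
    (x v : Vec N d) (η : ℝ) (hη : 0 < η)
    (xplus : Vec N d) (hx : xplus = Wmul Wb (x - η • v)) :
    ‖xplus - Jmul N d xplus‖ ^ 2 ≤
      ((1 + (lamOf Wb d) ^ 2) / 2) * ‖x - Jmul N d x‖ ^ 2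
        + (2 * η ^ 2 * (lamOf Wb d) ^ 2 / (1 - (lamOf Wb d) ^ 2)) * ‖v - Jmul N d v‖ ^ 2 := by
  set lam := lamOf Wb d with hlamdef
  have hl0 : 0 ≤ lam := norm_nonneg _
  set a := ‖x - Jmul N d x‖ with ha
  set b := ‖v - Jmul N d v‖ with hb
  -- key identity: x⁺ − Jx⁺ = (W − J)((x − Jx) − η(v − Jv))
  have key : xplus - Jmul N d xplus =
      Matrix.toEuclideanLin (kron Wb d - Jmat N d)
        ((x - Jmul N d x) - η • (v - Jmul N d v)) := by
    have hM : ∀ y : Vec N d,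
        Matrix.toEuclideanLin (kron Wb d - Jmat N d) y = Wmul Wb y - Jmul N d y := by
      intro y
      rw [map_sub Matrix.toEuclideanLin]
      rfl
    rw [hx, hM, Jmul_Wmul Wb hcol]
    simp only [Wmul_sub, Wmul_smul, Jmul_sub, Jmul_smul,
      Wmul_Jmul Wb hrow, Jmul_Jmul]
    module
  have hb1 : ‖xplus - Jmul N d xplus‖ ≤ lam * (a + η * b) := by
    rw [key]
    refine (lam_bound Wb _).trans ?_
    gcongr
    refine (norm_sub_le _ _).trans ?_
    rw [norm_smul, Real.norm_eq_abs, abs_of_pos hη]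
  have hsq : ‖xplus - Jmul N d xplus‖ ^ 2 ≤ lam ^ 2 * (a + η * b) ^ 2 := by
    have := pow_le_pow_left₀ (norm_nonneg _) hb1 2
    calc ‖xplus - Jmul N d xplus‖ ^ 2 ≤ (lam * (a + η * b)) ^ 2 := this
      _ = lam ^ 2 * (a + η * b) ^ 2 := by ring
  refine hsq.trans ?_
  have hc : 0 < 1 - lam ^ 2 := by nlinarith
  have hD : (2 * η ^ 2 * lam ^ 2 / (1 - lam ^ 2)) * (1 - lam ^ 2) = 2 * η ^ 2 * lam ^ 2 :=
    div_mul_cancel₀ _ hc.ne'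
  nlinarith [sq_nonneg ((1 - lam ^ 2) * a - 2 * lam ^ 2 * η * b), hc, hD, sq_nonneg b,
    mul_nonneg (mul_nonneg (sq_nonneg η) (sq_nonneg lam)) (sq_nonneg b),
    mul_nonneg (mul_nonneg (mul_nonneg (sq_nonneg η) (sq_nonneg lam)) (sq_nonneg b)) hc.le]

end
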